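/- Let P be a strongly and strictly stochastically transitive distribution on S_n with unique Kemeny median σ*_P, and fix a bucket size K and shape λ = (λ_1,...,λ_K) with Σλ_k = n. Then the unique minimizer of Λ_P(C) = Σ_{i≺_C j} p_{j,i} over all bucket orders of shape λ is C*^{(K,λ)} with buckets C*_k = { i : Σ_{l<k} λ_l < σ*_P(i) ≤ Σ_{l≤k} λ_l }. -/

import Mathlib

open Finset
open scoped Classical

/-- Pairwise marginal `p_{i,j} = P(σ(i) < σ(j))`. -/
def pairwiseMarginal {n : ℕ} (P : Equiv.Perm (Fin n) → ℝ) (i j : Fin n) : ℝ :=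
  ∑ σ : Equiv.Perm (Fin n), if σ i < σ j then P σ else 0

/-- Copeland/Kemeny rank: `σ*_P(i) = 1 + #{j ≠ i : p_{i,j} < 1/2}`. -/
noncomputable def copelandRank {n : ℕ} (P : Equiv.Perm (Fin n) → ℝ)
    (i : Fin n) : ℕ :=
  1 + (Finset.univ.filter (fun j => j ≠ i ∧ pairwiseMarginal P i j < 1 / 2)).card

/-- Distortion `Λ_P(C) = Σ_{i ≺_C j} p_{j,i}` of the bucket order encoded by `b`. -/
noncomputable def distortion {n K : ℕ} (P : Equiv.Perm (Fin n) → ℝ)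
    (b : Fin n → Fin K) : ℝ :=
  ∑ p ∈ Finset.univ.filter (fun p : Fin n × Fin n => b p.1 < b p.2),
    pairwiseMarginal P p.2 p.1

/-- The bucket order encoded by `b` has shape `lam`. -/
def HasShape {n K : ℕ} (b : Fin n → Fin K) (lam : Fin K → ℕ) : Prop :=
  ∀ k, (Finset.univ.filter (fun i => b i = k)).card = lam k

/-!
If `p_{i,j} > 1/2` but `i` sits in a later bucket than `j`, exchanging `i` and `j` keeps the
shape and strictly lowers `Λ_P`: pairing every ordered pair `(x, y)` with its image under the
transposition, strong stochastic transitivity shows that no pair gets worse, and the pair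
`(j, i)` itself strictly improves. So an optimal bucket order is monotone for the majority
relation. As `p_{i,j} + p_{j,i} = 1` and `p_{i,j} ≠ 1/2`, the elements beating `i` are exactly
the `σ*_P(i) - 1` elements with `p_{i,j} < 1/2`; monotonicity puts them in buckets up to that of
`i` and all others in buckets from that of `i` on, which pins the bucket of `i` down to the one
whose cumulative size range contains `σ*_P(i)`. This determines the optimal order, which exists
because there are finitely many bucket orders of a given shape.
-/

def StronglyStochasticallyTransitive {n : ℕ} (P : Equiv.Perm (Fin n) → ℝ) : Prop :=
  ∀ i j k : Fin n, i ≠ j → k ≠ i → k ≠ j →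
    1 / 2 ≤ pairwiseMarginal P i j → pairwiseMarginal P j k ≤ pairwiseMarginal P i k

def IsOptimalBucketOrder {n K : ℕ} (P : Equiv.Perm (Fin n) → ℝ) (lam : Fin K → ℕ)
    (b : Fin n → Fin K) : Prop :=
  HasShape b lam ∧ ∀ b' : Fin n → Fin K, HasShape b' lam → distortion P b ≤ distortion P b'

@[simp]
lemma pairwiseMarginal_self {n : ℕ} (P : Equiv.Perm (Fin n) → ℝ) (i : Fin n) :
    pairwiseMarginal P i i = 0 := by
  simp [pairwiseMarginal]

lemma pairwiseMarginal_add_pairwiseMarginal {n : ℕ} {P : Equiv.Perm (Fin n) → ℝ}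
    (hP1 : ∑ σ : Equiv.Perm (Fin n), P σ = 1)
    {i j : Fin n} (h : i ≠ j) : pairwiseMarginal P i j + pairwiseMarginal P j i = 1 := by
  rw [pairwiseMarginal, pairwiseMarginal, ← sum_add_distrib, ← hP1]
  refine sum_congr rfl fun σ _ => ?_
  rcases (σ.injective.ne h).lt_or_gt with hlt | hlt <;> simp [hlt, hlt.not_gt]

lemma le_of_lt_of_comp_swap_le {α β : Type*} [DecidableEq α] [LinearOrder β]
    {p : α → α → ℝ} {b : α → β} {i j : α} (hji : p j i ≤ p i j)
    (hrow : ∀ k, k ≠ i → k ≠ j → p j k ≤ p i k) (hcol : ∀ k, k ≠ i → k ≠ j → p k i ≤ p k j)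
    (hb : b j < b i) ⦃x y : α⦄ (hxy : b x < b y)
    (hswap : b (Equiv.swap i j y) ≤ b (Equiv.swap i j x)) :
    p (Equiv.swap i j y) (Equiv.swap i j x) ≤ p y x := by
  -- The pairs compatible with `hb` are `(j, i)`, `(j, k)` and `(k, i)`, handled by
  -- `hji`, `hcol k` and `hrow k`.
  simp only [Equiv.swap_apply_def] at hswap ⊢
  grind

lemma two_mul_distortion_sub_distortion_comp {n K : ℕ} (P : Equiv.Perm (Fin n) → ℝ)
    (b : Fin n → Fin K) {τ : Equiv.Perm (Fin n)} (hτ : Function.Involutive τ) :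
    2 * (distortion P b - distortion P (b ∘ τ)) =
      ∑ q : Fin n × Fin n,
        ((if b q.1 < b q.2 then 1 else 0) - (if b (τ q.1) < b (τ q.2) then 1 else 0)) *
          (pairwiseMarginal P q.2 q.1 - pairwiseMarginal P (τ q.2) (τ q.1)) := by
  set m := pairwiseMarginal P
  have reindex (f : Fin n × Fin n → ℝ) : ∑ q : Fin n × Fin n, f (τ q.1, τ q.2) = ∑ q, f q :=
    Fintype.sum_equiv (τ.prodCongr τ) _ _ fun _ => rfl
  have h₁ := reindex fun q : Fin n × Fin n => if b q.1 < b q.2 then m q.2 q.1 else 0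
  have h₂ := reindex fun q : Fin n × Fin n => if b (τ q.1) < b (τ q.2) then m q.2 q.1 else 0
  simp only [hτ _] at h₂
  simp only [distortion, sum_filter, Function.comp_apply]
  rw [two_mul]
  nth_rewrite 2 [← h₁]
  nth_rewrite 2 [← h₂]
  rw [← sum_sub_distrib, ← sum_sub_distrib, ← sum_add_distrib]
  refine sum_congr rfl fun q _ => ?_
  split_ifs <;> ring

lemma distortion_comp_swap_lt {n K : ℕ} {P : Equiv.Perm (Fin n) → ℝ}
    (hP1 : ∑ σ : Equiv.Perm (Fin n), P σ = 1) (hSST : StronglyStochasticallyTransitive P)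
    {b : Fin n → Fin K} {i j : Fin n} (hij : 1 / 2 < pairwiseMarginal P i j) (hb : b j < b i) :
    distortion P (b ∘ Equiv.swap i j) < distortion P b := by
  set m := pairwiseMarginal P
  have hne : i ≠ j := by rintro rfl; norm_num [m] at hij
  have hji : m j i < m i j := by linarith [pairwiseMarginal_add_pairwiseMarginal hP1 hne]
  have hrow : ∀ k, k ≠ i → k ≠ j → m j k ≤ m i k :=
    fun k hki hkj => hSST i j k hne hki hkj hij.le
  have hcol : ∀ k, k ≠ i → k ≠ j → m k i ≤ m k j := fun k hki hkj => by
    linarith [hrow k hki hkj, pairwiseMarginal_add_pairwiseMarginal hP1 hki,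
      pairwiseMarginal_add_pairwiseMarginal hP1 hkj]
  have key := le_of_lt_of_comp_swap_le hji.le hrow hcol hb
  rw [← sub_pos, ← mul_pos_iff_of_pos_left two_pos,
    two_mul_distortion_sub_distortion_comp P b (Equiv.swap_apply_self i j)]
  refine sum_pos' (fun ⟨x, y⟩ _ => ?_) ⟨(j, i), mem_univ _, ?_⟩
  · dsimp only
    split_ifs with hxy hswap hswap
    · simp
    · linarith [key hxy (not_lt.1 hswap)]
    · have := key hswap (by simpa using hxy)
      simp only [Equiv.swap_apply_self] at this
      linarith
    · simp
  · simpa [hb, hb.not_gt] using hji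

section Shape

variable {n K : ℕ} {b : Fin n → Fin K} {lam : Fin K → ℕ}

lemma HasShape.comp_perm (hs : HasShape b lam) (e : Equiv.Perm (Fin n)) :
    HasShape (b ∘ e) lam := fun k => by
  rw [← hs k]
  exact card_equiv e (by simp)

lemma HasShape.card_filter (hs : HasShape b lam) (q : Fin K → Prop) [DecidablePred q] :
    #{x | q (b x)} = ∑ l with q l, lam l := by
  simpa [hs _] using (sum_card_fiberwise_eq_card_filter univ {l | q l} b).symm

lemma exists_hasShape (hsum : ∑ k, lam k = n) : ∃ b : Fin n → Fin K, HasShape b lam := by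
  let e : Fin n ≃ Σ k : Fin K, Fin (lam k) := (Fintype.equivFinOfCardEq (by simp [hsum])).symm
  refine ⟨fun x => (e x).1, fun k => ?_⟩
  rw [card_equiv e (t := {s | s.1 = k}) (by simp), ← Fintype.card_subtype,
    Fintype.card_congr (Equiv.sigmaSubtype k), Fintype.card_fin]

end Shape

lemma eq_of_sum_lt_of_le_sum {ι : Type*} [Fintype ι] [LinearOrder ι] (f : ι → ℕ) {r : ℕ}
    {k₁ k₂ : ι} (h₁ : ∑ l with l < k₁, f l < r) (h₁' : r ≤ ∑ l with l ≤ k₁, f l)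
    (h₂ : ∑ l with l < k₂, f l < r) (h₂' : r ≤ ∑ l with l ≤ k₂, f l) : k₁ = k₂ := by
  have mono {a c : ι} (h : a < c) : ∑ l with l ≤ a, f l ≤ ∑ l with l < c, f l :=
    sum_le_sum_of_subset fun l hl => by
      simp only [mem_filter, mem_univ, true_and] at hl ⊢
      exact hl.trans_lt h
  rcases lt_trichotomy k₁ k₂ with h | h | h
  · linarith [mono h]
  · exact h
  · linarith [mono h]

namespace IsOptimalBucketOrder

variable {n K : ℕ} {P : Equiv.Perm (Fin n) → ℝ} {lam : Fin K → ℕ} {b : Fin n → Fin K}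

lemma le_of_half_lt (hP1 : ∑ σ : Equiv.Perm (Fin n), P σ = 1)
    (hSST : StronglyStochasticallyTransitive P) (hb : IsOptimalBucketOrder P lam b) {i j : Fin n}
    (hij : 1 / 2 < pairwiseMarginal P i j) : b i ≤ b j :=
  not_lt.1 fun hlt =>
    (hb.2 _ (hb.1.comp_perm (Equiv.swap i j))).not_gt (distortion_comp_swap_lt hP1 hSST hij hlt)

lemma sum_lt_copelandRank (hP1 : ∑ σ : Equiv.Perm (Fin n), P σ = 1)
    (hSST : StronglyStochasticallyTransitive P)
    (hstrict : ∀ i j : Fin n, i ≠ j → pairwiseMarginal P i j ≠ 1 / 2)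
    (hb : IsOptimalBucketOrder P lam b) (i : Fin n) :
    ∑ l with l < b i, lam l < copelandRank P i := by
  have hsub : ({x | b x < b i} : Finset (Fin n)) ⊆
      ({j | j ≠ i ∧ pairwiseMarginal P i j < 1 / 2} : Finset (Fin n)) := by
    intro x hx
    simp only [mem_filter, mem_univ, true_and] at hx ⊢
    have hxi : x ≠ i := by rintro rfl; exact hx.false
    refine ⟨hxi, not_le.1 fun hge => hx.not_ge ?_⟩
    exact hb.le_of_half_lt hP1 hSST (hge.lt_of_ne (hstrict i x hxi.symm).symm)
  have := card_le_card hsub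
  rw [hb.1.card_filter (· < b i)] at this
  unfold copelandRank
  omega

lemma copelandRank_le_sum (hP1 : ∑ σ : Equiv.Perm (Fin n), P σ = 1)
    (hSST : StronglyStochasticallyTransitive P) (hb : IsOptimalBucketOrder P lam b) (i : Fin n) :
    copelandRank P i ≤ ∑ l with l ≤ b i, lam l := by
  have hsub : insert i ({j | j ≠ i ∧ pairwiseMarginal P i j < 1 / 2} : Finset (Fin n)) ⊆
      ({x | b x ≤ b i} : Finset (Fin n)) := by
    intro x hx
    rcases mem_insert.1 hx with rfl | hx
    · simp
    · obtain ⟨hxi, hlt⟩ := (mem_filter.1 hx).2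
      have := pairwiseMarginal_add_pairwiseMarginal hP1 hxi
      simpa using hb.le_of_half_lt hP1 hSST (by linarith : 1 / 2 < pairwiseMarginal P x i)
  have := card_le_card hsub
  rw [card_insert_of_notMem (by simp), hb.1.card_filter (· ≤ b i)] at this
  unfold copelandRank
  omega

lemma eq (hP1 : ∑ σ : Equiv.Perm (Fin n), P σ = 1) (hSST : StronglyStochasticallyTransitive P)
    (hstrict : ∀ i j : Fin n, i ≠ j → pairwiseMarginal P i j ≠ 1 / 2)
    {b' : Fin n → Fin K} (hb : IsOptimalBucketOrder P lam b)
    (hb' : IsOptimalBucketOrder P lam b') : b = b' :=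
  funext fun i => eq_of_sum_lt_of_le_sum lam
    (hb.sum_lt_copelandRank hP1 hSST hstrict i) (hb.copelandRank_le_sum hP1 hSST i)
    (hb'.sum_lt_copelandRank hP1 hSST hstrict i) (hb'.copelandRank_le_sum hP1 hSST i)

end IsOptimalBucketOrder

lemma exists_isOptimalBucketOrder {n K : ℕ} (P : Equiv.Perm (Fin n) → ℝ) {lam : Fin K → ℕ}
    (hsum : ∑ k, lam k = n) : ∃ b, IsOptimalBucketOrder P lam b := by
  obtain ⟨b₀, hb₀⟩ := exists_hasShape hsum
  obtain ⟨b, hb, hmin⟩ := exists_min_image {b | HasShape b lam} (distortion P) ⟨b₀, by simpa⟩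
  exact ⟨b, by simpa using hb, fun b' hb' => hmin b' (by simpa)⟩

theorem unique_optimal_bucket_order_general {n K : ℕ} (P : Equiv.Perm (Fin n) → ℝ)
    (hP1 : ∑ σ : Equiv.Perm (Fin n), P σ = 1)
    (hSST : ∀ i j k : Fin n, i ≠ j → k ≠ i → k ≠ j →
      1 / 2 ≤ pairwiseMarginal P i j →
      pairwiseMarginal P j k ≤ pairwiseMarginal P i k)
    (hstrict : ∀ i j : Fin n, i ≠ j → pairwiseMarginal P i j ≠ 1 / 2)
    (lam : Fin K → ℕ) (hsum : ∑ k, lam k = n) :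
    (∃! b : Fin n → Fin K, HasShape b lam ∧
      ∀ b' : Fin n → Fin K, HasShape b' lam → distortion P b ≤ distortion P b') ∧
    (∀ b : Fin n → Fin K, HasShape b lam →
      (∀ b' : Fin n → Fin K, HasShape b' lam →
        distortion P b ≤ distortion P b') →
      ∀ i k, b i = k →
        (∑ l ∈ Finset.univ.filter (fun l => l < k), lam l) < copelandRank P i ∧
        copelandRank P i ≤ ∑ l ∈ Finset.univ.filter (fun l => l ≤ k), lam l) := by
  obtain ⟨b₀, hb₀⟩ := exists_isOptimalBucketOrder P hsum
  refine ⟨⟨b₀, hb₀, fun b hb => IsOptimalBucketOrder.eq hP1 hSST hstrict hb hb₀⟩, ?_⟩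
  rintro b hshape hmin i _ rfl
  have hb : IsOptimalBucketOrder P lam b := ⟨hshape, hmin⟩
  exact ⟨hb.sum_lt_copelandRank hP1 hSST hstrict i, hb.copelandRank_le_sum hP1 hSST i⟩

/-- If `P` is strongly and strictly stochastically transitive, then for any
bucket size `K` and shape `λ`, the minimizer of `Λ_P(C)` over bucket orders of
shape `λ` is unique, and it is the segmentation of the Copeland/Kemeny ranking:
its `k`-th bucket is `{ i : Σ_{l<k} λ_l < σ*_P(i) ≤ Σ_{l≤k} λ_l }`. -/
theorem unique_optimal_bucket_order {n K : ℕ} (P : Equiv.Perm (Fin n) → ℝ)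
    (hP0 : ∀ σ, 0 ≤ P σ) (hP1 : ∑ σ : Equiv.Perm (Fin n), P σ = 1)
    (hSST : ∀ i j k : Fin n, i ≠ j → k ≠ i → k ≠ j →
      1 / 2 ≤ pairwiseMarginal P i j →
      pairwiseMarginal P j k ≤ pairwiseMarginal P i k)
    (hstrict : ∀ i j : Fin n, i ≠ j → pairwiseMarginal P i j ≠ 1 / 2)
    (lam : Fin K → ℕ) (hlam : ∀ k, 1 ≤ lam k) (hsum : ∑ k, lam k = n) :
    (∃! b : Fin n → Fin K, HasShape b lam ∧
      ∀ b' : Fin n → Fin K, HasShape b' lam → distortion P b ≤ distortion P b') ∧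
    (∀ b : Fin n → Fin K, HasShape b lam →
      (∀ b' : Fin n → Fin K, HasShape b' lam →
        distortion P b ≤ distortion P b') →
      ∀ i k, b i = k →
        (∑ l ∈ Finset.univ.filter (fun l => l < k), lam l) < copelandRank P i ∧
        copelandRank P i ≤ ∑ l ∈ Finset.univ.filter (fun l => l ≤ k), lam l) :=
  unique_optimal_bucket_order_general P hP1 hSST hstrict lam hsum
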